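/- Let K be a field and b, c ∈ K such that the Kubert-Tate curve E(b,c) has nonzero discriminant. Then the point (0,0) on E(b,c) has order exactly 5 if and only if b = c. -/

import Mathlib

/-- The Kubert-Tate normal form curve E(b,c) : y^2 + (1-c)xy - by = x^3 - bx^2. -/
def Ebc {K : Type*} [CommRing K] (b c : K) : WeierstrassCurve.Affine K :=
  { a₁ := 1 - c, a₂ := -b, a₃ := -b, a₄ := 0, a₆ := 0 }
/-- The point (0, 0) on E(b,c), nonsingular since the discriminant is nonzero. -/
noncomputable def P₀ {K : Type*} [Field K] (b c : K) (hΔ : (Ebc b c).Δ ≠ 0) :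
    (Ebc b c).Point :=
  .some 0 0 (((Ebc b c).equation_iff_nonsingular_of_Δ_ne_zero hΔ).mp ((Ebc b c).equation_zero.mpr rfl))

/-!
With `P = (0, 0)`, the chord-tangent construction gives `2P = (b, bc)` and `3P = (c, b - c)`.
Hence `5P = 0` iff `3P = -2P = (b, 0)`, i.e. iff `b = c`. Since `P ≠ 0` and `5` is prime,
`5P = 0` is equivalent to `P` having order exactly `5`.
-/

open WeierstrassCurve.Affine

namespace Ebc

variable {K : Type*} [Field K] {b c : K}

lemma b_ne_zero_of_Δ_ne_zero (hΔ : (Ebc b c).Δ ≠ 0) : b ≠ 0 := by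
  rintro rfl
  apply hΔ
  simp [Ebc, WeierstrassCurve.Δ, WeierstrassCurve.b₂, WeierstrassCurve.b₄,
    WeierstrassCurve.b₆, WeierstrassCurve.b₈]

lemma nonsingular_b_mul (hΔ : (Ebc b c).Δ ≠ 0) : (Ebc b c).Nonsingular b (b * c) := by
  rw [← equation_iff_nonsingular_of_Δ_ne_zero hΔ, equation_iff]
  simp only [Ebc]
  ring

lemma nonsingular_c_sub (hΔ : (Ebc b c).Δ ≠ 0) : (Ebc b c).Nonsingular c (b - c) := by
  rw [← equation_iff_nonsingular_of_Δ_ne_zero hΔ, equation_iff]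
  simp only [Ebc]
  ring

variable [DecidableEq K]

lemma two_nsmul_P₀ (hΔ : (Ebc b c).Δ ≠ 0) :
    2 • P₀ b c hΔ = .some b (b * c) (nonsingular_b_mul hΔ) := by
  have hb := b_ne_zero_of_Δ_ne_zero hΔ
  have hy : (0 : K) ≠ (Ebc b c).negY 0 0 := by
    simpa [negY, Ebc] using hb.symm
  rw [two_nsmul, P₀, Point.add_self_of_Y_ne hy, Point.some.injEq,
    slope_of_Y_ne rfl hy]
  constructor <;>
  · simp only [addY, negAddY, addX, negY, Ebc]
    field_simp
    ring

lemma three_nsmul_P₀ (hΔ : (Ebc b c).Δ ≠ 0) :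
    3 • P₀ b c hΔ = .some c (b - c) (nonsingular_c_sub hΔ) := by
  have hb := b_ne_zero_of_Δ_ne_zero hΔ
  rw [succ_nsmul, two_nsmul_P₀, P₀, Point.add_of_X_ne hb, Point.some.injEq, slope_of_X_ne hb]
  constructor <;>
  · simp only [addY, negAddY, addX, negY, Ebc]
    field_simp
    ring

lemma five_nsmul_P₀_eq_zero_iff (hΔ : (Ebc b c).Δ ≠ 0) : 5 • P₀ b c hΔ = 0 ↔ b = c := by
  rw [show 5 = 3 + 2 from rfl, add_nsmul, add_eq_zero_iff_eq_neg, three_nsmul_P₀, two_nsmul_P₀,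
    Point.neg_some, Point.some.injEq]
  simp only [negY, Ebc]
  constructor
  · rintro ⟨h, -⟩
    exact h.symm
  · rintro rfl
    constructor <;> ring

end Ebc

open Classical in
theorem stmt_6 {K : Type*} [Field K] (b c : K) (hΔ : (Ebc b c).Δ ≠ 0) :
    addOrderOf (P₀ b c hΔ) = 5 ↔ b = c := by
  have : Fact (Nat.Prime 5) := ⟨Nat.prime_five⟩
  rw [addOrderOf_eq_prime_iff, Ebc.five_nsmul_P₀_eq_zero_iff]
  exact and_iff_left (Point.some_ne_zero _)
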